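/- For every positive integer n, det_{0≤i,j≤n-1}(C_{i+j} + C_{i+j+1}) = Σ_{s=0}^{n} binom(n+s, n-s). -/

import Mathlib

open Finset Matrix

/-- ballot-type numbers -/
def bb (i k : ℕ) : ℤ := (Nat.choose (2*i) (i+k) : ℤ) - (Nat.choose (2*i) (i+k+1) : ℤ)

lemma bb_eq_zero {i k : ℕ} (h : i < k) : bb i k = 0 := by
  unfold bb
  rw [Nat.choose_eq_zero_of_lt (by omega), Nat.choose_eq_zero_of_lt (by omega)]
  simp

lemma bb_self (i : ℕ) : bb i i = 1 := by
  unfold bb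
  rw [show i + i = 2*i by ring, Nat.choose_self, Nat.choose_eq_zero_of_lt (by omega)]
  simp

lemma bb_zero_left (k : ℕ) : bb 0 k = if k = 0 then 1 else 0 := by
  rcases k with _ | k
  · simp [bb]
  · rw [bb_eq_zero (by omega)]
    simp

lemma bb_zero_right (i : ℕ) : bb i 0 = catalan i := by
  have h1 : (i+1) * catalan i = Nat.centralBinom i := succ_mul_catalan_eq_centralBinom i
  have h2 : Nat.choose (2*i) (i + 1) * (i+1) = Nat.choose (2*i) i * (2*i - i) :=
    Nat.choose_succ_right_eq (2*i) i
  rw [show 2*i - i = i by omega] at h2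
  have h3 : Nat.centralBinom i = Nat.choose (2*i) i := rfl
  have hc : ((i:ℤ)+1) ≠ 0 := by positivity
  have key : ((i:ℤ)+1) * bb i 0 = ((i:ℤ)+1) * catalan i := by
    unfold bb
    have h2' : (Nat.choose (2*i) (i + 1) : ℤ) * ((i:ℤ)+1) = (Nat.choose (2*i) i : ℤ) * i := by
      exact_mod_cast congrArg (Nat.cast (R := ℤ)) h2
    have h1' : ((i:ℤ)+1) * (catalan i : ℤ) = (Nat.choose (2*i) i : ℤ) := by
      exact_mod_cast congrArg (Nat.cast (R := ℤ)) (h1.trans h3)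
    simp only [Nat.add_zero]
    rw [h1']
    linarith [h2']
  exact mul_left_cancel₀ hc key

lemma bb_succ_succ (i k : ℕ) : bb (i+1) (k+1) = bb i k + 2 * bb i (k+1) + bb i (k+2) := by
  unfold bb
  rw [show 2*(i+1) = (2*i+1)+1 by ring, show (i+1)+(k+1) = (i+k+1)+1 by ring,
    show (i+k+1)+1+1 = (i+k+2)+1 by ring]
  rw [Nat.choose_succ_succ (2*i+1) (i+k+1), Nat.choose_succ_succ (2*i+1) (i+k+2)]
  rw [show (2*i+1) = (2*i)+1 from rfl]
  simp only [Nat.choose_succ_succ, Nat.succ_eq_add_one]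
  rw [show i+(k+1) = i+k+1 by omega, show i+(k+2) = i+k+2 by omega,
    show i+k+1+1 = i+k+2 by omega, show i+k+2+1 = i+k+3 by omega,
    show i+k+1+1+1 = i+k+3 by omega]
  push_cast
  ring
lemma bb_succ_zero (i : ℕ) : bb (i+1) 0 = bb i 0 + bb i 1 := by
  unfold bb
  rw [show 2*(i+1) = (2*i+1)+1 by ring, show (i+1)+0 = i+1 by ring,
    show (i+1)+0+1 = (i+1)+1 by ring]
  rw [Nat.choose_succ_succ (2*i+1) i, Nat.choose_succ_succ (2*i+1) (i+1)]
  rw [← Nat.choose_symm_half i]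
  rw [show (2*i+1) = (2*i)+1 from rfl]
  simp only [Nat.choose_succ_succ, Nat.succ_eq_add_one]
  rw [show i+0 = i by omega, show i+0+1 = i+1 by omega, show i+1+1 = i+2 by omega]
  push_cast
  ring

lemma expand_lemma (i j N : ℕ) (hi : i + 1 ≤ N) (hj : j + 1 ≤ N) :
    ∑ k ∈ range (N+1), bb (i+1) k * bb j k =
    bb i 0 * bb j 0 + ∑ k ∈ range (N+1),
      (2 * bb i (k+1) * bb j (k+1) + bb i k * bb j (k+1) + bb i (k+1) * bb j k) := by
  have hbiN : bb i (N+1) = 0 := bb_eq_zero (by omega)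
  have hbjN : bb j (N+1) = 0 := bb_eq_zero (by omega)
  rw [Finset.sum_range_succ' (fun k => bb (i+1) k * bb j k) N]
  rw [bb_succ_zero]
  have e1 : ∀ k ∈ range N, bb (i+1) (k+1) * bb j (k+1) =
      (bb i k + 2 * bb i (k+1) + bb i (k+2)) * bb j (k+1) := by
    intro k _; rw [bb_succ_succ]
  rw [Finset.sum_congr rfl e1]
  -- Z = ∑_{k<N} bb i (k+2) * bb j (k+1), show bb i 1 * bb j 0 + Z = Y
  have hZ : bb i 1 * bb j 0 + ∑ k ∈ range N, bb i (k+2) * bb j (k+1)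
      = ∑ k ∈ range (N+1), bb i (k+1) * bb j k := by
    rw [Finset.sum_range_succ' (fun k => bb i (k+1) * bb j k) N]
    ring
  have hY : ∑ k ∈ range (N+1), bb i (k+1) * bb j k
      = ∑ k ∈ range N, bb i (k+1) * bb j k := by
    rw [Finset.sum_range_succ, hbiN]; ring
  -- transform RHS sums
  have r1 : ∑ k ∈ range (N+1),
      (2 * bb i (k+1) * bb j (k+1) + bb i k * bb j (k+1) + bb i (k+1) * bb j k)
      = ∑ k ∈ range N, 2 * bb i (k+1) * bb j (k+1)
        + ∑ k ∈ range N, bb i k * bb j (k+1)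
        + ∑ k ∈ range N, bb i (k+1) * bb j k := by
    rw [Finset.sum_add_distrib, Finset.sum_add_distrib]
    rw [Finset.sum_range_succ (fun k => 2 * bb i (k+1) * bb j (k+1)) N,
      Finset.sum_range_succ (fun k => bb i k * bb j (k+1)) N,
      Finset.sum_range_succ (fun k => bb i (k+1) * bb j k) N,
      hbiN, hbjN]
    ring
  rw [r1]
  have lhs1 : ∑ k ∈ range N, (bb i k + 2 * bb i (k+1) + bb i (k+2)) * bb j (k+1)
      = ∑ k ∈ range N, bb i k * bb j (k+1) + ∑ k ∈ range N, 2 * bb i (k+1) * bb j (k+1)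
        + ∑ k ∈ range N, bb i (k+2) * bb j (k+1) := by
    rw [← Finset.sum_add_distrib, ← Finset.sum_add_distrib]
    apply Finset.sum_congr rfl; intro k _; ring
  rw [lhs1]
  have hZ' : ∑ k ∈ range N, bb i (k+2) * bb j (k+1)
      = ∑ k ∈ range N, bb i (k+1) * bb j k - bb i 1 * bb j 0 := by
    rw [← hY]; linarith [hZ]
  rw [hZ']
  ring

lemma swap_lemma (i j N : ℕ) (hi : i + 1 ≤ N) (hj : j + 1 ≤ N) :
    ∑ k ∈ range (N+1), bb (i+1) k * bb j k = ∑ k ∈ range (N+1), bb i k * bb (j+1) k := by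
  rw [expand_lemma i j N hi hj]
  have h2 : ∑ k ∈ range (N+1), bb i k * bb (j+1) k
      = ∑ k ∈ range (N+1), bb (j+1) k * bb i k := by
    apply Finset.sum_congr rfl; intro k _; ring
  rw [h2, expand_lemma j i N hj hi]
  have h3 : ∑ k ∈ range (N+1),
      (2 * bb i (k+1) * bb j (k+1) + bb i k * bb j (k+1) + bb i (k+1) * bb j k)
      = ∑ k ∈ range (N+1),
      (2 * bb j (k+1) * bb i (k+1) + bb j k * bb i (k+1) + bb j (k+1) * bb i k) := by
    apply Finset.sum_congr rfl; intro k _; ring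
  rw [h3]; ring

lemma sum_bb_mul_bb : ∀ i j N : ℕ, i + j + 1 ≤ N →
    ∑ k ∈ range (N+1), bb i k * bb j k = catalan (i+j) := by
  intro i
  induction i with
  | zero =>
    intro j N hN
    have : ∀ k ∈ range (N+1), bb 0 k * bb j k = if k = 0 then bb j 0 else 0 := by
      intro k _
      rw [bb_zero_left]
      split <;> simp_all
    rw [Finset.sum_congr rfl this, Finset.sum_ite_eq' (range (N+1)) 0 (fun _ => bb j 0)]
    simp [bb_zero_right]
  | succ i ih =>
    intro j N hN
    rw [swap_lemma i j N (by omega) (by omega), ih (j+1) N (by omega),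
      show i + (j+1) = (i+1)+j by omega]

lemma sum_bb_trunc (i j n N : ℕ) (hi : i < n) (hn : n ≤ N+1) :
    ∑ k ∈ range n, bb i k * bb j k = ∑ k ∈ range (N+1), bb i k * bb j k := by
  apply Finset.sum_subset
  · exact Finset.range_subset_range.mpr hn
  · intro k _ hk
    rw [bb_eq_zero (show i < k by simp at hk; omega)]
    ring

lemma sum_bb_eq (i j n : ℕ) (hi : i < n) :
    ∑ k ∈ range n, bb i k * bb j k = catalan (i+j) := by
  rw [sum_bb_trunc i j n (n + i + j + 1) hi (by omega)]
  exact sum_bb_mul_bb i j (n+i+j+1) (by omega)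

noncomputable def rr (k : ℕ) : ℚ := (Nat.fib (2*k+1) : ℚ) / (Nat.fib (2*k+3) : ℚ)
noncomputable def dd (k : ℕ) : ℚ := (Nat.fib (2*k+3) : ℚ) / (Nat.fib (2*k+1) : ℚ)

lemma fibq_ne {m : ℕ} (h : 0 < m) : (Nat.fib m : ℚ) ≠ 0 := by
  have := Nat.fib_pos.mpr h
  positivity

lemma rr_mul_dd (k : ℕ) : rr k * dd k = 1 := by
  unfold rr dd
  rw [div_mul_div_comm, div_eq_one_iff_eq
    (mul_ne_zero (fibq_ne (by omega)) (fibq_ne (by omega)))]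
  ring

lemma dd_zero : dd 0 = 2 := by norm_num [dd, Nat.fib]

lemma fib_add_four (m : ℕ) : Nat.fib (m+4) + Nat.fib m = 3 * Nat.fib (m+2) := by
  have e2 := Nat.fib_add_two (n := m)
  have e3 := Nat.fib_add_two (n := m+1)
  have e4 := Nat.fib_add_two (n := m+2)
  rw [show m+1+2 = m+3 by omega, show m+1+1 = m+2 by omega] at e3
  rw [show m+2+2 = m+4 by omega, show m+2+1 = m+3 by omega] at e4
  omega

lemma dd_succ_add_rr (k : ℕ) : dd (k+1) + rr k = 3 := by
  unfold dd rr
  rw [show 2*(k+1)+3 = 2*k+5 by omega, show 2*(k+1)+1 = 2*k+3 by omega]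
  rw [← add_div]
  have h' : (Nat.fib (2*k+5) : ℚ) + Nat.fib (2*k+1) = 3 * Nat.fib (2*k+3) := by
    exact_mod_cast congrArg (Nat.cast (R := ℚ))
      ((show 2*k+1+4 = 2*k+5 by omega) ▸ fib_add_four (2*k+1))
  rw [h', mul_div_assoc, div_self (fibq_ne (by omega)), mul_one]

lemma prod_dd (n : ℕ) : ∏ k ∈ range n, dd k = (Nat.fib (2*n+1) : ℚ) := by
  induction n with
  | zero => simp
  | succ n ih =>
    rw [Finset.prod_range_succ, ih]
    unfold dd
    rw [show 2*n+3 = 2*(n+1)+1 by omega]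
    rw [mul_div_cancel₀ _ (fibq_ne (m := 2*n+1) (by omega))]

noncomputable def bq (i k : ℕ) : ℚ := (bb i k : ℚ)

lemma bq_eq_zero {i k : ℕ} (h : i < k) : bq i k = 0 := by
  rw [bq, bb_eq_zero h]; norm_num

lemma sum_bq_eq (i j n : ℕ) (hi : i < n) :
    ∑ k ∈ range n, bq i k * bq j k = (catalan (i+j) : ℚ) := by
  unfold bq
  have h := sum_bb_eq i j n hi
  exact_mod_cast h

lemma keyQ (n i j : ℕ) (hn : 0 < n) (hi : i < n) (hj : j < n) :
    ∑ k ∈ range n, ((bq i k + rr k * bq i (k+1)) * dd k) * (bq j k + rr k * bq j (k+1)) =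
      (catalan (i+j) : ℚ) + (catalan (i+j+1) : ℚ) := by
  obtain ⟨m, rfl⟩ : ∃ m, n = m + 1 := ⟨n - 1, by omega⟩
  set n := m + 1 with hn'
  have hbin : bq i (m+1) = 0 := bq_eq_zero (by omega)
  have hbjn : bq j (m+1) = 0 := bq_eq_zero (by omega)
  -- per-term expansion
  have step1 : ∀ k ∈ range n,
      ((bq i k + rr k * bq i (k+1)) * dd k) * (bq j k + rr k * bq j (k+1)) =
      dd k * (bq i k * bq j k) + bq i k * bq j (k+1) + bq i (k+1) * bq j k
        + rr k * (bq i (k+1) * bq j (k+1)) := by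
    intro k _
    have h := rr_mul_dd k
    linear_combination (bq i k * bq j (k+1) + bq i (k+1) * bq j k
      + rr k * (bq i (k+1) * bq j (k+1))) * h
  rw [Finset.sum_congr rfl step1]
  rw [Finset.sum_add_distrib, Finset.sum_add_distrib, Finset.sum_add_distrib]
  set Sd := ∑ k ∈ range n, dd k * (bq i k * bq j k) with hSd
  set X := ∑ k ∈ range n, bq i k * bq j (k+1) with hX
  set Y := ∑ k ∈ range n, bq i (k+1) * bq j k with hY
  set Sr := ∑ k ∈ range n, rr k * (bq i (k+1) * bq j (k+1)) with hSr
  set S1 := ∑ k ∈ range n, bq i k * bq j k with hS1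
  set P := ∑ k ∈ range m, bq i (k+1) * bq j (k+1) with hP
  have hS1P : S1 = bq i 0 * bq j 0 + P := by
    rw [hS1, Finset.sum_range_succ' (fun k => bq i k * bq j k) m, hP]; ring
  have hSdP : Sd = dd 0 * (bq i 0 * bq j 0)
      + ∑ k ∈ range m, dd (k+1) * (bq i (k+1) * bq j (k+1)) := by
    rw [hSd, Finset.sum_range_succ' (fun k => dd k * (bq i k * bq j k)) m]; ring
  have hSrP : Sr = ∑ k ∈ range m, rr k * (bq i (k+1) * bq j (k+1)) := by
    rw [hSr, Finset.sum_range_succ (fun k => rr k * (bq i (k+1) * bq j (k+1))) m, hbin]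
    ring
  have hdr : Sd + Sr = 3 * S1 - bq i 0 * bq j 0 := by
    have e3 : ∀ k ∈ range m, dd (k+1) * (bq i (k+1) * bq j (k+1))
        + rr k * (bq i (k+1) * bq j (k+1)) = 3 * (bq i (k+1) * bq j (k+1)) := by
      intro k _
      have h := dd_succ_add_rr k
      linear_combination (bq i (k+1) * bq j (k+1)) * h
    have comb : (∑ k ∈ range m, dd (k+1) * (bq i (k+1) * bq j (k+1)))
        + (∑ k ∈ range m, rr k * (bq i (k+1) * bq j (k+1))) = 3 * P := by
      rw [← Finset.sum_add_distrib, hP, Finset.mul_sum]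
      exact Finset.sum_congr rfl e3
    rw [hSdP, hSrP, dd_zero, hS1P]
    linarith [comb]
  -- second sum S2
  set S2 := ∑ k ∈ range n, bq i k * bq (j+1) k with hS2
  have hS2e : S2 = 2 * S1 - bq i 0 * bq j 0 + X + Y := by
    have e0 : bq (j+1) 0 = bq j 0 + bq j 1 := by
      unfold bq; rw [bb_succ_zero]; push_cast; ring
    have es : ∀ k, bq (j+1) (k+1) = bq j k + 2 * bq j (k+1) + bq j (k+2) := by
      intro k; unfold bq; rw [bb_succ_succ]; push_cast; ring
    have expand : S2 = bq i 0 * (bq j 0 + bq j 1)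
        + ∑ k ∈ range m, bq i (k+1) * (bq j k + 2 * bq j (k+1) + bq j (k+2)) := by
      rw [hS2, Finset.sum_range_succ' (fun k => bq i k * bq (j+1) k) m, e0]
      have : ∀ k ∈ range m, bq i (k+1) * bq (j+1) (k+1)
          = bq i (k+1) * (bq j k + 2 * bq j (k+1) + bq j (k+2)) := by
        intro k _; rw [es]
      rw [Finset.sum_congr rfl this]; ring
    have split : ∑ k ∈ range m, bq i (k+1) * (bq j k + 2 * bq j (k+1) + bq j (k+2))
        = (∑ k ∈ range m, bq i (k+1) * bq j k)
          + 2 * P + ∑ k ∈ range m, bq i (k+1) * bq j (k+2) := by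
      rw [hP, Finset.mul_sum, ← Finset.sum_add_distrib, ← Finset.sum_add_distrib]
      apply Finset.sum_congr rfl; intro k _; ring
    have hYm : Y = ∑ k ∈ range m, bq i (k+1) * bq j k := by
      rw [hY, Finset.sum_range_succ (fun k => bq i (k+1) * bq j k) m, hbin]; ring
    have hXm : X = bq i 0 * bq j 1 + ∑ k ∈ range m, bq i (k+1) * bq j (k+2) := by
      rw [hX, Finset.sum_range_succ' (fun k => bq i k * bq j (k+1)) m]; ring
    rw [expand, split, ← hYm, hS1P]
    rw [show ∑ k ∈ range m, bq i (k+1) * bq j (k+2) = X - bq i 0 * bq j 1 by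
      rw [hXm]; ring]
    ring
  have c1 : S1 = (catalan (i+j) : ℚ) := sum_bq_eq i j n hi
  have c2 : S2 = (catalan (i+j+1) : ℚ) := by
    rw [hS2, sum_bq_eq i (j+1) n hi, show i+(j+1) = i+j+1 by omega]
  linarith [hdr, hS2e, c1, c2]


lemma bq_self (i : ℕ) : bq i i = 1 := by
  rw [bq, bb_self]; norm_num

lemma rhs_fib (n : ℕ) :
    ∑ s ∈ range (n+1), Nat.choose (n+s) (n-s) = Nat.fib (2*n+1) := by
  have h1 : Nat.fib (2*n+1) = ∑ p ∈ Finset.HasAntidiagonal.antidiagonal (2*n), Nat.choose p.1 p.2 :=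
    Nat.fib_succ_eq_sum_choose (2*n)
  rw [h1, Finset.Nat.sum_antidiagonal_eq_sum_range_succ_mk]
  have h2 : ∑ k ∈ range (2*n+1), Nat.choose k (2*n-k)
      = ∑ j ∈ range (2*n+1), Nat.choose (2*n-j) j := by
    rw [← Finset.sum_range_reflect (fun j => Nat.choose (2*n-j) j) (2*n+1)]
    apply Finset.sum_congr rfl
    intro j hj
    simp only [mem_range] at hj
    congr 1 <;> omega
  rw [h2]
  have h3 : ∑ j ∈ range (2*n+1), Nat.choose (2*n-j) j
      = ∑ j ∈ range (n+1), Nat.choose (2*n-j) j := by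
    symm
    apply Finset.sum_subset (Finset.range_subset_range.mpr (by omega))
    intro j hj hj'
    simp only [mem_range] at hj hj'
    exact Nat.choose_eq_zero_of_lt (by omega)
  rw [h3, ← Finset.sum_range_reflect (fun j => Nat.choose (2*n-j) j) (n+1)]
  apply Finset.sum_congr rfl
  intro s hs
  simp only [mem_range] at hs
  congr 1 <;> omega

theorem catalan_sum_hankel_det (n : ℕ) (hn : 0 < n) :
    Matrix.det (Matrix.of fun i j : Fin n =>
      (catalan (i.1 + j.1) : ℤ) + (catalan (i.1 + j.1 + 1) : ℤ)) =
    ∑ s ∈ Finset.range (n + 1), (Nat.choose (n + s) (n - s) : ℤ) := by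
  set M : Matrix (Fin n) (Fin n) ℤ := Matrix.of fun i j : Fin n =>
      (catalan (i.1 + j.1) : ℤ) + (catalan (i.1 + j.1 + 1) : ℤ) with hM
  set W : Matrix (Fin n) (Fin n) ℚ :=
      Matrix.of (fun i k : Fin n => bq i.1 k.1 + rr k.1 * bq i.1 (k.1+1)) with hW
  set D : Matrix (Fin n) (Fin n) ℚ := Matrix.diagonal (fun k : Fin n => dd k.1) with hD
  have factor : M.map (Int.cast : ℤ → ℚ) = W * D * Wᵀ := by
    ext i j
    rw [Matrix.map_apply]
    have entry : (W * D * Wᵀ) i j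
        = ∑ k : Fin n, ((bq i.1 k.1 + rr k.1 * bq i.1 (k.1+1)) * dd k.1)
            * (bq j.1 k.1 + rr k.1 * bq j.1 (k.1+1)) := by
      rw [Matrix.mul_apply]
      apply Finset.sum_congr rfl
      intro k _
      rw [Matrix.mul_diagonal, Matrix.transpose_apply]
      simp [hW]
    rw [entry]
    have : ∑ k : Fin n, ((bq i.1 k.1 + rr k.1 * bq i.1 (k.1+1)) * dd k.1)
            * (bq j.1 k.1 + rr k.1 * bq j.1 (k.1+1))
        = ∑ k ∈ range n, ((bq i.1 k + rr k * bq i.1 (k+1)) * dd k)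
            * (bq j.1 k + rr k * bq j.1 (k+1)) :=
      Fin.sum_univ_eq_sum_range
        (fun k => ((bq i.1 k + rr k * bq i.1 (k+1)) * dd k)
            * (bq j.1 k + rr k * bq j.1 (k+1))) n
    rw [this, keyQ n i.1 j.1 hn i.isLt j.isLt]
    simp [hM]
  have hWtri : W.BlockTriangular OrderDual.toDual := by
    intro i j hij
    have : i < j := hij
    have h1 : bq i.1 j.1 = 0 := bq_eq_zero (by exact_mod_cast this)
    have h2 : bq i.1 (j.1+1) = 0 := bq_eq_zero (by
      have : i.1 < j.1 := this
      omega)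
    simp [hW, h1, h2]
  have detW : W.det = 1 := by
    rw [Matrix.det_of_lowerTriangular W hWtri]
    have : ∀ i : Fin n, W i i = 1 := by
      intro i
      have h2 : bq i.1 (i.1+1) = 0 := bq_eq_zero (by omega)
      simp [hW, h2, bq_self]
    rw [Finset.prod_congr rfl (fun i _ => this i)]
    simp
  have detD : D.det = (Nat.fib (2*n+1) : ℚ) := by
    rw [hD, Matrix.det_diagonal, ← prod_dd n]
    exact Fin.prod_univ_eq_prod_range _ n
  have detQ : (M.det : ℚ) = (Nat.fib (2*n+1) : ℚ) := by
    have : (M.map (Int.cast : ℤ → ℚ)).det = (M.det : ℚ) := by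
      have := RingHom.map_det (Int.castRingHom ℚ) M
      simpa [RingHom.mapMatrix_apply] using this.symm
    rw [← this, factor, Matrix.det_mul, Matrix.det_mul, detW, Matrix.det_transpose, detW,
      detD]
    ring
  have rhsQ : ((∑ s ∈ Finset.range (n + 1), (Nat.choose (n + s) (n - s) : ℤ)) : ℚ)
      = (Nat.fib (2*n+1) : ℚ) := by
    push_cast
    rw [← rhs_fib n]
    push_cast
    rfl
  have : (M.det : ℚ) = ((∑ s ∈ Finset.range (n + 1), (Nat.choose (n + s) (n - s) : ℤ)) : ℚ) := by
    rw [detQ, rhsQ]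
  exact_mod_cast this
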